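/- Let C be a class of groups closed under finite direct products such that the free product of residually C groups is residually C. Then the free product of two LE-C groups is LE-C. -/

import Mathlib

abbrev GroupClass : Type 1 := ∀ (G : Type) [Group G], Prop

def IsoClosed (C : GroupClass) : Prop :=
  ∀ (G H : Type) [Group G] [Group H], Nonempty (G ≃* H) → C G → C H

/-- `N` is a normal subgroup with quotient in the class `C`. -/
def NormalQuotientIn (C : GroupClass) {G : Type} [Group G] (N : Subgroup G) : Prop :=
  ∃ h : N.Normal, by haveI := h; exact C (G ⧸ N)

/-- `G` is residually `C`: every nontrivial element survives in a surjective image lying in `C`. -/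
def Residually (C : GroupClass) (G : Type*) [Group G] : Prop :=
  ∀ g : G, g ≠ 1 → ∃ (Q : GrpCat.{0}) (φ : G →* Q), Function.Surjective φ ∧ C Q ∧ φ g ≠ 1

/-- The Gruenberg condition for a class of groups `C`. -/
def GruenbergCondition (C : GroupClass) : Prop :=
  ∀ (G : Type) [Group G] (H K : Subgroup G) [H.Normal] [(K.subgroupOf H).Normal],
    K ≤ H → C (G ⧸ H) → C (↥H ⧸ K.subgroupOf H) →
    ∃ L : Subgroup G, L ≤ K ∧ NormalQuotientIn C L

/-- A root class of groups. -/
def RootClass (R : GroupClass) : Prop :=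
  (∃ G : GrpCat.{0}, Nontrivial G ∧ R G) ∧
  IsoClosed R ∧
  (∀ (G : Type) [Group G] (H : Subgroup G), R G → R H) ∧
  (∀ (G H : Type) [Group G] [Group H], R G → R H → R (G × H)) ∧
  GruenbergCondition R

/-- Amenability: a finitely additive left-invariant probability measure on all subsets. -/
def IsAmenable (G : Type*) [Group G] : Prop :=
  ∃ m : Set G → ℝ,
    m Set.univ = 1 ∧
    (∀ A : Set G, 0 ≤ m A) ∧
    (∀ A B : Set G, Disjoint A B → m (A ∪ B) = m A + m B) ∧
    (∀ (g : G) (A : Set G), m ((g * ·) '' A) = m A)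

def amenableClass : GroupClass := fun G inst => @IsAmenable G inst

def solvableClass : GroupClass := fun G inst => @IsSolvable G inst

/-- `φ` is a `K`-almost-homomorphism: multiplicative on `K` and injective on `K`. -/
def KAlmostHom {G C : Type*} [Group G] [Group C] (K : Set G) (φ : G → C) : Prop :=
  (∀ k₁ ∈ K, ∀ k₂ ∈ K, φ (k₁ * k₂) = φ k₁ * φ k₂) ∧ Set.InjOn φ K

/-- `G` is locally embeddable into the class `C` (`G` is LE-`C`) if every finite subset
of `G` admits an almost-homomorphism into some group of `C`. -/
def LEClass (C : GroupClass) (G : Type*) [Group G] : Prop :=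
  ∀ K : Finset G, ∃ (Q : GrpCat.{0}) (φ : G → Q), C Q ∧ KAlmostHom (K : Set G) φ

/-!
Given a finite `K ⊆ G₁ ∗ G₂`, take almost-homomorphisms `φᵢ : Gᵢ → Qᵢ` into groups of `C` on the
finitely many letters of the reduced words of `K` (together with `1`), and send a reduced word
`g₁ ⋯ gₙ` to `φ(g₁) ⋯ φ(gₙ) ∈ Q₁ ∗ Q₂`. Reducing the concatenation of two reduced words only ever
multiplies a letter of the first with a letter of the second, so this map is multiplicative on
`K`; it is injective on `K` because the image of a reduced word is again reduced. Finally
`Q₁ ∗ Q₂` is residually `C`, and as `C` is closed under products a single homomorphism to a group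
of `C` separates the finitely many points of the image of `K`.
-/

open Function Set Monoid

def ProdClosed (C : GroupClass) : Prop :=
  ∀ (G H : Type) [Group G] [Group H], C G → C H → C (G × H)

namespace KAlmostHom

variable {G H P : Type*} [Group G] [Group H] [Group P] {K : Set G} {φ : G → H}

theorem map_one (hφ : KAlmostHom K φ) (h1 : (1 : G) ∈ K) : φ 1 = 1 := by
  have h := hφ.1 1 h1 1 h1
  rwa [one_mul, left_eq_mul] at h

theorem comp_monoidHom (f : P →* G) (hf : Injective f) {S : Set P}
    (hφ : KAlmostHom (f '' S) φ) : KAlmostHom S (φ ∘ f) :=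
  ⟨fun a ha b hb => by
    simp only [comp_apply, map_mul]
    exact hφ.1 _ (mem_image_of_mem f ha) _ (mem_image_of_mem f hb),
   hφ.2.comp hf.injOn (mapsTo_image f S)⟩

theorem monoidHom_comp (hφ : KAlmostHom K φ) (ψ : H →* P) (hψ : InjOn ψ (φ '' K)) :
    KAlmostHom K (ψ ∘ φ) :=
  ⟨fun a ha b hb => by simp only [comp_apply, hφ.1 a ha b hb, map_mul],
   hψ.comp hφ.2 (mapsTo_image φ K)⟩

end KAlmostHom

theorem LEClass.of_injective {C : GroupClass} {G H : Type*} [Group G] [Group H] (f : G →* H)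
    (hf : Injective f) (h : LEClass C H) : LEClass C G := by
  classical
  intro K
  obtain ⟨Q, φ, hQ, hφ⟩ := h (K.image f)
  rw [Finset.coe_image] at hφ
  exact ⟨Q, φ ∘ f, hQ, hφ.comp_monoidHom f hf⟩

namespace Residually

variable {C : GroupClass}

theorem of_mem {R : Type} [Group R] (h : C R) : Residually C R :=
  fun _ hg => ⟨GrpCat.of R, MonoidHom.id R, surjective_id, h, hg⟩

theorem of_mulEquiv {R S : Type*} [Group R] [Group S] (e : R ≃* S) (h : Residually C S) :
    Residually C R := by
  intro g hg
  obtain ⟨Q, ψ, hψ, hQ, hg'⟩ := h (e g) (by simpa using hg)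
  exact ⟨Q, ψ.comp e.toMonoidHom, hψ.comp e.surjective, hQ, hg'⟩

variable {R : Type*} [Group R]

theorem exists_forall_map_ne_one (hprod : ProdClosed C) (hR : Residually C R) {P₀ : Type}
    [Group P₀] (hP₀ : C P₀) {s : Set R} (hs : s.Finite) (h1 : 1 ∉ s) :
    ∃ (P : GrpCat.{0}) (ψ : R →* P), C P ∧ ∀ x ∈ s, ψ x ≠ 1 := by
  induction s, hs using Set.Finite.induction_on with
  | empty => exact ⟨GrpCat.of P₀, 1, hP₀, by simp⟩
  | @insert a s _ _ ih =>
    obtain ⟨P, ψ, hP, hψ⟩ := ih fun h => h1 (mem_insert_of_mem a h)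
    obtain ⟨Pa, θ, -, hPa, hθ⟩ := hR a fun h => h1 (h ▸ mem_insert a s)
    refine ⟨GrpCat.of (Pa × P), θ.prod ψ, hprod _ _ hPa hP, ?_⟩
    rintro x (rfl | hx) h
    · exact hθ (congrArg Prod.fst h)
    · exact hψ x hx (congrArg Prod.snd h)

theorem exists_injOn (hprod : ProdClosed C) (hR : Residually C R) {P₀ : Type} [Group P₀]
    (hP₀ : C P₀) {F : Set R} (hF : F.Finite) :
    ∃ (P : GrpCat.{0}) (ψ : R →* P), C P ∧ InjOn ψ F := by
  obtain ⟨P, ψ, hP, hψ⟩ := hR.exists_forall_map_ne_one hprod hP₀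
    (((hF.prod hF).image fun p => p.1 * p.2⁻¹).sdiff (t := {1})) (by simp)
  refine ⟨P, ψ, hP, fun x hx y hy hxy => by_contra fun hne => ?_⟩
  exact hψ (x * y⁻¹) ⟨⟨(x, y), ⟨hx, hy⟩, rfl⟩, mul_inv_eq_one.not.mpr hne⟩
    (by rw [map_mul, map_inv, hxy, mul_inv_cancel])

end Residually

universe u

def pairFamily (A B : Type u) : Bool → Type u := fun b => cond b A B

instance (A B : Type u) [Group A] [Group B] : ∀ b, Group (pairFamily A B b)
  | true => ‹Group A›
  | false => ‹Group B›

noncomputable def coprodMulEquivCoprodI (F : Bool → Type*) [∀ b, Monoid (F b)] :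
    Coprod (F true) (F false) ≃* CoprodI F :=
  MonoidHom.toMulEquiv (Coprod.lift CoprodI.of CoprodI.of)
    (CoprodI.lift fun | true => Coprod.inl | false => Coprod.inr)
    (by ext <;> simp)
    (by ext (_ | _) <;> simp)

theorem List.eq_of_map_eq_of_injOn {α β : Type*} {f : α → β} {s : Set α} (hf : InjOn f s)
    {l l' : List α} (hl : ∀ x ∈ l, x ∈ s) (hl' : ∀ x ∈ l', x ∈ s) (h : l.map f = l'.map f) :
    l = l' := by
  induction l generalizing l' with
  | nil => exact (List.map_eq_nil_iff.mp h.symm).symm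
  | cons a l ih =>
    cases l' with
    | nil => exact absurd h (List.cons_ne_nil _ _)
    | cons b l' =>
      rw [List.map_cons, List.map_cons, List.cons.injEq] at h
      rw [hf (hl a List.mem_cons_self) (hl' b List.mem_cons_self) h.1,
        ih (fun x hx => hl x (List.mem_cons_of_mem _ hx))
          (fun x hx => hl' x (List.mem_cons_of_mem _ hx)) h.2]

namespace Monoid.CoprodI.Word

variable {ι : Type*} {M : ι → Type*} [∀ i, Monoid (M i)] {N : Type*} [Monoid N]

def mapProd (δ : ∀ i, M i → N) (w : Word M) : N :=
  (w.toList.map fun l => δ l.1 l.2).prod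

theorem mapProd_cons {δ : ∀ i, M i → N} {i : ι} (m : M i) (w : Word M) (h1 h2) :
    mapProd δ (cons m w h1 h2) = δ i m * mapProd δ w := by
  simp [mapProd, cons]

section map

variable {Q : ι → Type*} [∀ i, Monoid (Q i)]

def map (φ : ∀ i, M i → Q i) (w : Word M) (hw : ∀ l ∈ w.toList, φ l.1 l.2 ≠ 1) : Word Q where
  toList := w.toList.map fun l => ⟨l.1, φ l.1 l.2⟩
  ne_one l hl := by
    obtain ⟨a, ha, rfl⟩ := List.mem_map.mp hl
    exact hw a ha
  chain_ne := (List.isChain_map _).mpr w.chain_ne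

theorem prod_map (φ : ∀ i, M i → Q i) (w : Word M) (hw : ∀ l ∈ w.toList, φ l.1 l.2 ≠ 1) :
    (map φ w hw).prod = mapProd (fun i m => of (φ i m)) w := by
  simp only [prod, map, mapProd, List.map_map]
  rfl

theorem eq_of_mapProd_of_eq (L : ∀ i, Set (M i)) (h1L : ∀ i, 1 ∈ L i) {φ : ∀ i, M i → Q i}
    (hφ1 : ∀ i, φ i 1 = 1) (hφ : ∀ i, InjOn (φ i) (L i)) {w w' : Word M}
    (hw : ∀ l ∈ w.toList, l.2 ∈ L l.1) (hw' : ∀ l ∈ w'.toList, l.2 ∈ L l.1)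
    (h : mapProd (fun i m => of (φ i m)) w = mapProd (fun i m => of (φ i m)) w') : w = w' := by
  classical
  have hne (v : Word M) (hv : ∀ l ∈ v.toList, l.2 ∈ L l.1) : ∀ l ∈ v.toList, φ l.1 l.2 ≠ 1 :=
    fun l hl h1 => v.ne_one l hl (hφ l.1 (hv l hl) (h1L l.1) (h1.trans (hφ1 _).symm))
  have hmap : map φ w (hne w hw) = map φ w' (hne w' hw') :=
    equiv.symm.injective (by simp only [equiv, Equiv.coe_fn_symm_mk, prod_map, h])
  have hinj : InjOn (fun l : Σ i, M i => (⟨l.1, φ l.1 l.2⟩ : Σ i, Q i)) {l | l.2 ∈ L l.1} := by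
    rintro ⟨i, a⟩ ha ⟨j, b⟩ hb hab
    simp only [Sigma.mk.inj_iff] at hab
    obtain ⟨rfl, hab⟩ := hab
    exact congrArg (Sigma.mk i) (hφ i ha hb (eq_of_heq hab))
  exact Word.ext (List.eq_of_map_eq_of_injOn hinj hw hw' (congrArg toList hmap))

end map

variable [∀ i, DecidableEq (M i)]

theorem toList_rcons {i : ι} (p : Pair M i) :
    (rcons p).toList =
      if p.head = 1 then p.tail.toList else ⟨i, p.head⟩ :: p.tail.toList := by
  unfold rcons
  split_ifs <;> rfl

variable [DecidableEq ι]

theorem toList_eq_equivPair (i : ι) (w : Word M) :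
    w.toList = if (equivPair i w).head = 1 then (equivPair i w).tail.toList
      else ⟨i, (equivPair i w).head⟩ :: (equivPair i w).tail.toList := by
  conv_lhs => rw [← (equivPair i).symm_apply_apply w, equivPair_symm]
  exact toList_rcons _

theorem equivPair_tail_isSuffix (i : ι) (w : Word M) :
    (equivPair i w).tail.toList <:+ w.toList := by
  rw [toList_eq_equivPair i w]
  split_ifs
  · exact List.suffix_refl _
  · exact List.suffix_cons _ _

theorem toList_of_equivPair_head_ne_one {i : ι} {w : Word M} (h : (equivPair i w).head ≠ 1) :
    w.toList = ⟨i, (equivPair i w).head⟩ :: (equivPair i w).tail.toList := by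
  rw [toList_eq_equivPair i w, if_neg h]

theorem fstIdx_of_equivPair_head_ne_one {i : ι} {w : Word M} (h : (equivPair i w).head ≠ 1) :
    w.fstIdx = some i := by
  rw [fstIdx, toList_of_equivPair_head_ne_one h]
  rfl

theorem fstIdx_prod_smul_eq_or_isSuffix (u w : Word M) :
    (u.prod • w).fstIdx = u.fstIdx ∨ (u.prod • w).toList <:+ w.toList := by
  induction u using consRecOn with
  | empty => exact Or.inr (by rw [prod_empty, one_smul])
  | cons i a u hu ha ih =>
    rw [prod_cons, mul_smul, of_smul_def, fstIdx_cons]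
    set r := u.prod • w
    by_cases hah : a * (equivPair i r).head = 1
    · have hh : (equivPair i r).head ≠ 1 := fun h => ha (by rwa [h, mul_one] at hah)
      have hr : r.toList <:+ w.toList :=
        ih.resolve_left (by rw [fstIdx_of_equivPair_head_ne_one hh]; exact Ne.symm hu)
      right
      rw [rcons, dif_pos hah]
      exact (equivPair_tail_isSuffix i r).trans hr
    · left
      rw [rcons, dif_neg hah, fstIdx_cons]

theorem isSuffix_of_equivPair_head_ne_one {i : ι} {u w : Word M} (hu : u.fstIdx ≠ some i)
    (h : (equivPair i (u.prod • w)).head ≠ 1) : (u.prod • w).toList <:+ w.toList :=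
  (fstIdx_prod_smul_eq_or_isSuffix u w).resolve_left
    (by rw [fstIdx_of_equivPair_head_ne_one h]; exact Ne.symm hu)

variable {δ : ∀ i, M i → N}

theorem mapProd_eq_equivPair (hδ1 : ∀ i, δ i 1 = 1) (i : ι) (w : Word M) :
    mapProd δ w = δ i (equivPair i w).head * mapProd δ (equivPair i w).tail := by
  rw [mapProd, toList_eq_equivPair i w]
  split_ifs with h
  · rw [h, hδ1, one_mul, mapProd]
  · rw [List.map_cons, List.prod_cons, mapProd]

theorem mapProd_of_smul (hδ1 : ∀ i, δ i 1 = 1) {i : ι} (a : M i) (w : Word M) :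
    mapProd δ (of a • w) = δ i (a * (equivPair i w).head) * mapProd δ (equivPair i w).tail := by
  rw [mapProd_eq_equivPair hδ1 i, equivPair_smul_same]

theorem mapProd_prod_smul (L : ∀ i, Set (M i)) (hδ1 : ∀ i, δ i 1 = 1)
    (hδ : ∀ i, ∀ a ∈ L i, ∀ b ∈ L i, δ i (a * b) = δ i a * δ i b) {u w : Word M}
    (hu : ∀ l ∈ u.toList, l.2 ∈ L l.1) (hw : ∀ l ∈ w.toList, l.2 ∈ L l.1) :
    mapProd δ (u.prod • w) = mapProd δ u * mapProd δ w := by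
  induction u using consRecOn with
  | empty => rw [prod_empty, one_smul]; exact (one_mul _).symm
  | cons i a u hu1 ha ih =>
    have haL : a ∈ L i := hu ⟨i, a⟩ List.mem_cons_self
    set r := u.prod • w
    have hmul : δ i (a * (equivPair i r).head) = δ i a * δ i (equivPair i r).head := by
      by_cases hh : (equivPair i r).head = 1
      · rw [hh, mul_one, hδ1, mul_one]
      · have hmem : ⟨i, (equivPair i r).head⟩ ∈ w.toList :=
          (isSuffix_of_equivPair_head_ne_one hu1 hh).subset
            (by rw [toList_of_equivPair_head_ne_one hh]; exact List.mem_cons_self)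
        exact hδ i a haL _ (hw _ hmem)
    calc mapProd δ ((cons a u hu1 ha).prod • w) = mapProd δ (of a • r) := by
          rw [prod_cons, mul_smul]
      _ = δ i a * mapProd δ r := by
          rw [mapProd_of_smul hδ1, hmul, mul_assoc, ← mapProd_eq_equivPair hδ1]
      _ = mapProd δ (cons a u hu1 ha) * mapProd δ w := by
          rw [ih (fun l hl => hu l (List.mem_cons_of_mem _ hl)), mapProd_cons, mul_assoc]

theorem mapProd_equiv_mul (L : ∀ i, Set (M i)) (hδ1 : ∀ i, δ i 1 = 1)
    (hδ : ∀ i, ∀ a ∈ L i, ∀ b ∈ L i, δ i (a * b) = δ i a * δ i b) {x y : CoprodI M}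
    (hx : ∀ l ∈ (equiv x).toList, l.2 ∈ L l.1) (hy : ∀ l ∈ (equiv y).toList, l.2 ∈ L l.1) :
    mapProd δ (equiv (x * y)) = mapProd δ (equiv x) * mapProd δ (equiv y) := by
  have h : equiv (x * y) = (equiv x).prod • equiv y := by
    simp [equiv, mul_smul]
  rw [h, mapProd_prod_smul L hδ1 hδ hx hy]

end Monoid.CoprodI.Word



namespace Monoid.CoprodI

variable {ι : Type*} [DecidableEq ι] {G : ι → Type*} [∀ i, Group (G i)] [∀ i, DecidableEq (G i)]

def letters (K : Set (CoprodI G)) (i : ι) : Set (G i) :=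
  {g | ∃ x ∈ K, ⟨i, g⟩ ∈ (Word.equiv x).toList}

theorem letters_finite {K : Set (CoprodI G)} (hK : K.Finite) (i : ι) : (letters K i).Finite := by
  have h : letters K i = ⋃ x ∈ K, Sigma.mk i ⁻¹' {l | l ∈ (Word.equiv x).toList} := by
    ext
    simp [letters]
  rw [h]
  exact hK.biUnion fun x _ => (List.finite_toSet _).preimage sigma_mk_injective.injOn

variable {Q : ι → Type*} [∀ i, Group (Q i)]

def letterwise (φ : ∀ i, G i → Q i) (x : CoprodI G) : CoprodI Q :=
  (Word.equiv x).mapProd fun i g => of (φ i g)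

theorem kAlmostHom_letterwise (K : Set (CoprodI G)) (φ : ∀ i, G i → Q i)
    (hφ : ∀ i, KAlmostHom (insert 1 (letters K i)) (φ i)) : KAlmostHom K (letterwise φ) := by
  have hK : ∀ x ∈ K, ∀ l ∈ (Word.equiv x).toList, l.2 ∈ insert 1 (letters K l.1) :=
    fun x hx l hl => Or.inr ⟨x, hx, hl⟩
  have hφ1 (i : ι) : φ i 1 = 1 := (hφ i).map_one (mem_insert _ _)
  refine ⟨fun x hx y hy => ?_, fun x hx y hy hxy => ?_⟩
  · refine Word.mapProd_equiv_mul (fun i => insert 1 (letters K i))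
      (fun i => by rw [hφ1, map_one]) (fun i a ha b hb => ?_) (hK x hx) (hK y hy)
    rw [(hφ i).1 a ha b hb, map_mul]
  · exact Word.equiv.injective
      (Word.eq_of_mapProd_of_eq (fun i => insert 1 (letters K i)) (fun i => mem_insert _ _) hφ1
        (fun i => (hφ i).2) (hK x hx) (hK y hy) hxy)

end Monoid.CoprodI

theorem LEClass.coprodI {C : GroupClass} (hprod : ProdClosed C) {ι : Type*} [DecidableEq ι]
    [Nonempty ι] {G : ι → Type*} [∀ i, Group (G i)] (hG : ∀ i, LEClass C (G i))
    (hres : ∀ (Q : ι → Type) [∀ i, Group (Q i)], (∀ i, C (Q i)) → Residually C (CoprodI Q)) :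
    LEClass C (CoprodI G) := by
  classical
  intro K
  choose Q φ hQ hφ using fun i =>
    hG i ((CoprodI.letters_finite K.finite_toSet i).insert 1).toFinset
  simp only [Set.Finite.coe_toFinset] at hφ
  obtain ⟨P, ψ, hP, hψ⟩ := (hres (fun i => Q i) hQ).exists_injOn hprod
    (hQ (Classical.arbitrary ι)) (K.finite_toSet.image (CoprodI.letterwise φ))
  exact ⟨P, ψ ∘ CoprodI.letterwise φ, hP,
    (CoprodI.kAlmostHom_letterwise _ φ hφ).monoidHom_comp ψ hψ⟩


/-- If a class of groups `C` is closed under finite direct products and the free product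
of residually `C` groups is residually `C`, then the free product of two LE-`C` groups
is LE-`C`. -/
theorem freeProduct_LE_of_freeProduct_residually (C : GroupClass)
    (hprod : ∀ (G H : Type) [Group G] [Group H], C G → C H → C (G × H))
    (hfp : ∀ (A B : Type) [Group A] [Group B],
      Residually C A → Residually C B → Residually C (Monoid.Coprod A B))
    (G₁ G₂ : Type) [Group G₁] [Group G₂]
    (h₁ : LEClass C G₁) (h₂ : LEClass C G₂) :
    LEClass C (Monoid.Coprod G₁ G₂) := by
  have hres (Q : Bool → Type) [∀ b, Group (Q b)] (hQ : ∀ b, C (Q b)) :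
      Residually C (CoprodI Q) :=
    (hfp _ _ (.of_mem (hQ true)) (.of_mem (hQ false))).of_mulEquiv (coprodMulEquivCoprodI Q).symm
  exact LEClass.of_injective (coprodMulEquivCoprodI (pairFamily G₁ G₂)).toMonoidHom
    (MulEquiv.injective _) (LEClass.coprodI hprod (G := pairFamily G₁ G₂) (Bool.rec h₂ h₁) hres)
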